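/- Assume A_1 is invertible and that L̃ has finite entries. Then: (1) for every n ≥ 1, the matrix L̃(n) (expected occupation at level 0 before hitting level n) is invertible; (2) the fundamental matrix G = ℙ(J_{τ^{1}}) is invertible; (3) for every n ≥ 1 the scale matrix W(n) = G^{−n} L̃(n) is invertible. -/

import Mathlib

/- Framework: a discrete-time, discrete-space upward skip-free Markov additive chain (MAC)
on ℤ × {1,…,N}, with one-step transition matrices `A m` (for a level increment of `m`), is
encoded combinatorially: the law of the chain started at a state `s` is determined by the
weights of its finite trajectories, so every probability/expectation appearing in the paper
can be written as a (countable) sum of trajectory weights. -/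

attribute [local instance] Classical.propDecidable

noncomputable section

namespace MACPaper

/-- state space: level × phase -/
abbrev S (N : ℕ) := ℤ × Fin N

variable {N : ℕ}

/-- one-step transition weight -/
def step (A : ℤ → Matrix (Fin N) (Fin N) ℝ) (s t : S N) : ℝ :=
  A (t.1 - s.1) s.2 t.2

/-- probability weight of a finite trajectory, given by the list of successive states after `s` -/
def wt (A : ℤ → Matrix (Fin N) (Fin N) ℝ) : S N → List (S N) → ℝ
  | _, [] => 1
  | s, t :: r => step A s t * wt A t r

/-- the trajectory (as a function of time) determined by start `s` and subsequent states `l` -/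
def pos (s : S N) (l : List (S N)) : ℕ → S N
  | 0 => s
  | n + 1 => l.getD n s

/-- expectation of a path functional over trajectories of length `n` started at `s` -/
def expec (A : ℤ → Matrix (Fin N) (Fin N) ℝ) (s : S N) (n : ℕ)
    (f : (ℕ → S N) → ℝ) : ℝ :=
  ∑' l : { l : List (S N) // l.length = n }, f (pos s l.1) * wt A s l.1

/-- probability of an event depending on the trajectory up to time `n` -/
def prob (A : ℤ → Matrix (Fin N) (Fin N) ℝ) (s : S N) (n : ℕ)
    (E : (ℕ → S N) → Prop) : ℝ :=
  expec A s n fun p => if E p then 1 else 0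

/-- F(z) = Σ_{m=-1}^{∞} z^m A_{-m}   (entrywise) -/
def Fmat (A : ℤ → Matrix (Fin N) (Fin N) ℝ) (z : ℝ) : Matrix (Fin N) (Fin N) ℝ :=
  Matrix.of fun i j => ∑' m : ℤ, z ^ m * A (-m) i j

/-- P = Σ_m A_m  (entrywise) -/
def Pmat (A : ℤ → Matrix (Fin N) (Fin N) ℝ) : Matrix (Fin N) (Fin N) ℝ :=
  Matrix.of fun i j => ∑' m : ℤ, A m i j

/-- `τ^{x} = n`: the chain first hits level `x` at time `n` -/
def hitsAt (x : ℤ) (n : ℕ) (p : ℕ → S N) : Prop :=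
  (p n).1 = x ∧ ∀ k < n, (p k).1 ≠ x

/-- matrix 𝔼(v^{τ^{x}}; τ^{x} < ∞, J_{τ^{x}}), chain started at (0,·) -/
def hitMat (A : ℤ → Matrix (Fin N) (Fin N) ℝ) (v : ℝ) (x : ℤ) :
    Matrix (Fin N) (Fin N) ℝ :=
  Matrix.of fun i j =>
    ∑' n : ℕ, v ^ n * prob A ((0 : ℤ), i) n fun p => hitsAt x n p ∧ (p n).2 = j

/-- v-discounted occupation mass matrix at level `x` (infinite horizon), chain started at (0,·) -/
def occMat (A : ℤ → Matrix (Fin N) (Fin N) ℝ) (v : ℝ) (x : ℤ) :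
    Matrix (Fin N) (Fin N) ℝ :=
  Matrix.of fun i j =>
    ∑' k : ℕ, v ^ k * prob A ((0 : ℤ), i) k fun p => p k = (x, j)

/-- v-discounted occupation mass at level 0 up to the first hitting time of level `n` -/
def occUpToMat (A : ℤ → Matrix (Fin N) (Fin N) ℝ) (v : ℝ) (n : ℤ) :
    Matrix (Fin N) (Fin N) ℝ :=
  Matrix.of fun i j =>
    ∑' k : ℕ, v ^ k * prob A ((0 : ℤ), i) k fun p =>
      p k = ((0 : ℤ), j) ∧ ∀ m < k, (p m).1 ≠ n

/-- the fundamental matrix G = ℙ(J_{τ^{1}}) -/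
def Gmat (A : ℤ → Matrix (Fin N) (Fin N) ℝ) : Matrix (Fin N) (Fin N) ℝ :=
  hitMat A 1 1

/-- L̃ : occupation mass matrix at level 0, infinite horizon -/
def Ltilde (A : ℤ → Matrix (Fin N) (Fin N) ℝ) : Matrix (Fin N) (Fin N) ℝ :=
  occMat A 1 0

/-- the first scale matrix W(n) = (G^{-n} - ℙ(J_{τ^{-n}})) L̃ -/
def Wmat (A : ℤ → Matrix (Fin N) (Fin N) ℝ) (n : ℕ) : Matrix (Fin N) (Fin N) ℝ :=
  ((Gmat A)⁻¹ ^ n - hitMat A 1 (-(n : ℤ))) * Ltilde A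

/-- v-discounted first scale matrix W_v(n) = (G_v^{-n} - 𝔼(v^{τ^{-n}}; J_{τ^{-n}})) L̃_v -/
def WmatV (A : ℤ → Matrix (Fin N) (Fin N) ℝ) (v : ℝ) (n : ℕ) :
    Matrix (Fin N) (Fin N) ℝ :=
  ((hitMat A v 1)⁻¹ ^ n - hitMat A v (-(n : ℤ))) * occMat A v 0

/-- the second scale matrix Z(z,n) = z^{-n}[I + Σ_{k=0}^{n} z^k W(k) (I - F(z))] -/
def Zmat (A : ℤ → Matrix (Fin N) (Fin N) ℝ) (z : ℝ) (n : ℕ) :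
    Matrix (Fin N) (Fin N) ℝ :=
  z⁻¹ ^ n • (1 + (∑ k ∈ Finset.range (n + 1), z ^ k • Wmat A k) * (1 - Fmat A z))

/-- matrix 𝔼(v^{τ_a^+}; τ_a^+ < τ_{-b}^-, J_{τ_a^+}) (upward exit from the strip [-b,a]) -/
def upExitMat (A : ℤ → Matrix (Fin N) (Fin N) ℝ) (v : ℝ) (a b : ℤ) :
    Matrix (Fin N) (Fin N) ℝ :=
  Matrix.of fun i j =>
    ∑' n : ℕ, v ^ n * prob A ((0 : ℤ), i) n fun p =>
      a ≤ (p n).1 ∧ (∀ k < n, -b < (p k).1 ∧ (p k).1 < a) ∧ (p n).2 = j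

/-- matrix 𝔼(z^{-X_{τ_{-b}^-}}; τ_{-b}^- < τ_a^+, J_{τ_{-b}^-}) (downward exit from [-b,a]) -/
def downExitMat (A : ℤ → Matrix (Fin N) (Fin N) ℝ) (z : ℝ) (a b : ℤ) :
    Matrix (Fin N) (Fin N) ℝ :=
  Matrix.of fun i j =>
    ∑' n : ℕ, expec A ((0 : ℤ), i) n fun p =>
      if (p n).1 ≤ -b ∧ (∀ k < n, -b < (p k).1 ∧ (p k).1 < a) ∧ (p n).2 = j
      then z ^ (-(p n).1) else 0

/-- matrix 𝔼(z^{-X_{τ_{-b}^-}}; τ_{-b}^- < ∞, J_{τ_{-b}^-}) (one-sided downward exit) -/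
def oneDownMat (A : ℤ → Matrix (Fin N) (Fin N) ℝ) (z : ℝ) (b : ℤ) :
    Matrix (Fin N) (Fin N) ℝ :=
  Matrix.of fun i j =>
    ∑' n : ℕ, expec A ((0 : ℤ), i) n fun p =>
      if (p n).1 ≤ -b ∧ (∀ k < n, -b < (p k).1) ∧ (p n).2 = j
      then z ^ (-(p n).1) else 0

/-- two-sided Skorokhod reflection of the level path `X` in [-d,0], started at `x`:
the regulated process H -/
def reflH (d : ℕ) (x : ℤ) (X : ℕ → ℤ) : ℕ → ℤ
  | 0 => x
  | n + 1 =>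
      reflH d x X n + (X (n + 1) - X n)
        - max (reflH d x X n + (X (n + 1) - X n)) 0
        + max (-(d : ℤ) - (reflH d x X n + (X (n + 1) - X n))) 0

/-- upper regulator R^+ of the two-sided reflection in [-d,0] -/
def reflRp (d : ℕ) (x : ℤ) (X : ℕ → ℤ) : ℕ → ℤ
  | 0 => 0
  | n + 1 => reflRp d x X n + max (reflH d x X n + (X (n + 1) - X n)) 0

/-- lower regulator R^- of the two-sided reflection in [-d,0] -/
def reflRm (d : ℕ) (x : ℤ) (X : ℕ → ℤ) : ℕ → ℤ
  | 0 => 0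
  | n + 1 => reflRm d x X n + max (-(d : ℤ) - (reflH d x X n + (X (n + 1) - X n))) 0

/-- lower regulator of the one-sided reflection at -b : R^{-b}_n = -b - min(-b, min_{k≤n} X_k) -/
def lowReg (b : ℤ) (X : ℕ → ℤ) (n : ℕ) : ℤ :=
  -b - min (-b) ((Finset.range (n + 1)).inf' ⟨0, Finset.mem_range.mpr (Nat.succ_pos n)⟩ X)

/-!
Splitting a visit to level `0` before level `n` at the first return to level `0` and applying
the Markov property gives the renewal identity `L̃(n) = I + R(n) L̃(n)`, where `R(n)` is the
matrix of first returns to level `0` before level `n`; finiteness of `L̃` makes all the series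
converge. Hence `(I - R(n)) L̃(n) = I`, so `L̃(n)` is invertible. Since the chain is upward
skip-free, it first reaches level `1` by a jump from level `0`, so `G = L̃(1) A₁` is invertible,
and then so is `G⁻ⁿ L̃(n)`.
-/

theorem existsUnique_isFirst {Q : ℕ → Prop} {k : ℕ} (hk : Q k) :
    ∃! r, r ∈ Finset.range (k + 1) ∧ Q r ∧ ∀ m < r, ¬Q m := by
  have hex : ∃ r, Q r := ⟨k, hk⟩
  refine ⟨Nat.find hex, ⟨Finset.mem_range_succ_iff.2 (Nat.find_le hk),
    (Nat.find_eq_iff hex).1 rfl⟩, fun r hr => ((Nat.find_eq_iff hex).2 hr.2).symm⟩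

theorem eq_sub_one_of_firstHit {X : ℕ → ℤ} {a : ℤ} {k : ℕ}
    (hup : ∀ m ≤ k, X (m + 1) ≤ X m + 1) (h0 : X 0 < a) (hhit : X (k + 1) = a)
    (hfirst : ∀ m < k + 1, X m ≠ a) : X k = a - 1 := by
  have hbelow : ∀ m ≤ k, X m < a := by
    intro m hm
    induction m with
    | zero => exact h0
    | succ m ih =>
      have := hup m (by omega)
      have := hfirst (m + 1) (by omega)
      have := ih (by omega)
      omega
  have := hup k le_rfl
  have := hbelow k le_rfl
  omega

theorem _root_.Matrix.isUnit_of_eq_one_add_mul {n R : Type*} [Fintype n] [DecidableEq n]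
    [CommRing R] {M H : Matrix n n R} (h : M = 1 + H * M) : IsUnit M := by
  have hinv : (1 - H) * M = 1 := by
    rw [sub_mul, one_mul, sub_eq_iff_eq_add]
    exact h
  exact (Matrix.isUnit_iff_isUnit_det M).2 (Matrix.isUnit_det_of_left_inverse hinv)

structure IsSubstochastic (A : ℤ → Matrix (Fin N) (Fin N) ℝ) : Prop where
  nonneg : ∀ m i j, 0 ≤ A m i j
  summable : ∀ i, Summable fun q : ℤ × Fin N => A q.1 i q.2
  tsum_le_one : ∀ i, ∑' q : ℤ × Fin N, A q.1 i q.2 ≤ 1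

abbrev Traj (N k : ℕ) := { l : List (S N) // l.length = k }

instance : Unique (Traj N 0) :=
  ⟨⟨⟨[], rfl⟩⟩, fun l => Subtype.ext (List.length_eq_zero_iff.mp l.2)⟩

def Traj.consEquiv (k : ℕ) : S N × Traj N k ≃ Traj N (k + 1) where
  toFun x := ⟨x.1 :: x.2.1, by simp [x.2.2]⟩
  invFun
    | ⟨[], h⟩ => absurd h (by simp)
    | ⟨t :: r, h⟩ => (t, ⟨r, by simpa using h⟩)
  left_inv _ := rfl
  right_inv
    | ⟨t :: _, _⟩ => rfl

def Traj.singletonEquiv : S N ≃ Traj N 1 :=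
  (Equiv.prodUnique (S N) (Traj N 0)).symm.trans (Traj.consEquiv 0)

def Traj.appendEquiv (r m : ℕ) : Traj N r × Traj N m ≃ Traj N (r + m) where
  toFun x := ⟨x.1.1 ++ x.2.1, by simp [x.1.2, x.2.2]⟩
  invFun l := (⟨l.1.take r, by simp [l.2]⟩, ⟨l.1.drop r, by simp [l.2]⟩)
  left_inv := fun ⟨⟨a, ha⟩, ⟨b, hb⟩⟩ => by simp [← ha]
  right_inv _ := by simp

variable {A : ℤ → Matrix (Fin N) (Fin N) ℝ}

namespace IsSubstochastic

theorem step_nonneg (hA : IsSubstochastic A) (s t : S N) : 0 ≤ step A s t :=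
  hA.nonneg _ _ _

theorem hasSum_step (hA : IsSubstochastic A) (s : S N) :
    HasSum (step A s) (∑' q : ℤ × Fin N, A q.1 s.2 q.2) :=
  (Equiv.prodCongr (Equiv.subRight s.1) (Equiv.refl _)).hasSum_iff.mpr (hA.summable s.2).hasSum

theorem wt_nonneg (hA : IsSubstochastic A) (s : S N) (l : List (S N)) : 0 ≤ wt A s l := by
  induction l generalizing s with
  | nil => exact zero_le_one
  | cons t r ih => exact mul_nonneg (hA.step_nonneg s t) (ih t)

theorem summable_wt_and_tsum_le_one (hA : IsSubstochastic A) (k : ℕ) (s : S N) :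
    Summable (fun l : Traj N k => wt A s l.1) ∧ ∑' l : Traj N k, wt A s l.1 ≤ 1 := by
  induction k generalizing s with
  | zero =>
    refine ⟨.of_finite, ?_⟩
    simp only [tsum_fintype, Finset.univ_unique, Finset.sum_singleton]
    exact le_rfl
  | succ k ih =>
    have hnonneg (x : S N × Traj N k) : 0 ≤ step A s x.1 * wt A x.1 x.2.1 :=
      mul_nonneg (hA.step_nonneg _ _) (hA.wt_nonneg _ _)
    have hrow (t : S N) : ∑' r : Traj N k, step A s t * wt A t r.1 ≤ step A s t := by
      rw [tsum_mul_left]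
      exact mul_le_of_le_one_right (hA.step_nonneg s t) (ih t).2
    have hrows : Summable fun t => ∑' r : Traj N k, step A s t * wt A t r.1 :=
      (hA.hasSum_step s).summable.of_nonneg_of_le (fun t => tsum_nonneg fun r => hnonneg (t, r))
        hrow
    have hprod : Summable fun x : S N × Traj N k => step A s x.1 * wt A x.1 x.2.1 := by
      rw [summable_prod_of_nonneg hnonneg]
      exact ⟨fun t => (ih t).1.mul_left (step A s t), hrows⟩
    refine ⟨(Traj.consEquiv k).summable_iff (f := fun l : Traj N (k + 1) => wt A s l.1)
      |>.mp hprod, ?_⟩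
    calc ∑' l : Traj N (k + 1), wt A s l.1
        = ∑' x : S N × Traj N k, step A s x.1 * wt A x.1 x.2.1 :=
          ((Traj.consEquiv k).tsum_eq fun l : Traj N (k + 1) => wt A s l.1).symm
      _ = ∑' (t : S N) (r : Traj N k), step A s t * wt A t r.1 :=
          hprod.tsum_prod' fun t => (ih t).1.mul_left (step A s t)
      _ ≤ ∑' t, step A s t := hrows.tsum_le_tsum hrow (hA.hasSum_step s).summable
      _ ≤ 1 := (hA.hasSum_step s).tsum_eq ▸ hA.tsum_le_one s.2

theorem summable_prob_summand (hA : IsSubstochastic A) (s : S N) (k : ℕ)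
    (E : (ℕ → S N) → Prop) :
    Summable fun l : Traj N k => (if E (pos s l.1) then (1 : ℝ) else 0) * wt A s l.1 :=
  (hA.summable_wt_and_tsum_le_one k s).1.of_nonneg_of_le
    (fun l => mul_nonneg (by positivity) (hA.wt_nonneg _ _))
    (fun l => mul_le_of_le_one_left (hA.wt_nonneg _ _) (by split_ifs <;> norm_num))

theorem prob_nonneg (hA : IsSubstochastic A) (s : S N) (k : ℕ) (E : (ℕ → S N) → Prop) :
    0 ≤ prob A s k E :=
  tsum_nonneg fun _ => mul_nonneg (by positivity) (hA.wt_nonneg _ _)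

theorem prob_mono (hA : IsSubstochastic A) (s : S N) (k : ℕ) {E F : (ℕ → S N) → Prop}
    (h : ∀ p, E p → F p) : prob A s k E ≤ prob A s k F := by
  refine (hA.summable_prob_summand s k E).tsum_le_tsum (fun l => ?_)
    (hA.summable_prob_summand s k F)
  gcongr
  · exact hA.wt_nonneg _ _
  · dsimp only
    split_ifs with hE hF
    exacts [le_rfl, absurd (h _ hE) hF, zero_le_one, le_rfl]

end IsSubstochastic

theorem prob_congr_of_wt_ne_zero {s : S N} {k : ℕ} {E F : (ℕ → S N) → Prop}
    (h : ∀ l : List (S N), l.length = k → wt A s l ≠ 0 → (E (pos s l) ↔ F (pos s l))) :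
    prob A s k E = prob A s k F := by
  refine tsum_congr fun l => ?_
  by_cases hw : wt A s l.1 = 0
  · simp [hw]
  · simp only [if_congr (h l.1 l.2 hw) rfl rfl]

theorem prob_zero (s : S N) (E : (ℕ → S N) → Prop) :
    prob A s 0 E = if E (fun _ => s) then 1 else 0 := by
  have hpos : pos s [] = fun _ => s := by funext t; cases t <;> rfl
  rw [prob, expec, tsum_fintype, Finset.univ_unique, Finset.sum_singleton]
  exact (congrArg (fun p => (if E p then (1 : ℝ) else 0) * wt A s []) hpos).trans (mul_one _)

theorem prob_one (s t : S N) : prob A s 1 (fun p => p 1 = t) = step A s t := by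
  rw [prob, expec, ← Traj.singletonEquiv.tsum_eq]
  refine (tsum_congr fun t' => ?_).trans (tsum_ite_eq t (step A s))
  have hpos : pos s (Traj.singletonEquiv t').1 1 = t' := rfl
  have hwt : wt A s (Traj.singletonEquiv t').1 = step A s t' := mul_one _
  rw [hpos, hwt, boole_mul]
  congr

theorem pos_append_of_le (s : S N) {a : List (S N)} (b : List (S N)) {m : ℕ}
    (hm : m ≤ a.length) : pos s (a ++ b) m = pos s a m := by
  cases m with
  | zero => rfl
  | succ m =>
    simp [pos, List.getD_eq_getElem?_getD, List.getElem?_append_left (by omega : m < a.length)]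

theorem pos_length (s : S N) (a : List (S N)) : pos s a a.length = a.getLastD s := by
  cases a with
  | nil => rfl
  | cons t r =>
    simp [pos, List.getD_eq_getElem?_getD, List.getLastD_eq_getLast?, List.getLast?_eq_getElem?]

theorem pos_append_add (s : S N) (a : List (S N)) {b : List (S N)} {m : ℕ}
    (hm : m ≤ b.length) : pos s (a ++ b) (a.length + m) = pos (a.getLastD s) b m := by
  cases m with
  | zero => rw [Nat.add_zero, pos_append_of_le s b le_rfl, pos_length]; rfl
  | succ m =>
    simp [pos, List.getD_eq_getElem?_getD, List.getElem?_append_right,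
      List.getElem?_eq_getElem (by omega : m < b.length)]

theorem pos_cons (s t : S N) (r : List (S N)) (m : ℕ) (hm : m ≤ r.length) :
    pos s (t :: r) (m + 1) = pos t r m := by
  cases m with
  | zero => rfl
  | succ m => simp [pos, List.getElem?_eq_getElem (by omega : m < r.length)]

theorem wt_append (s : S N) (a b : List (S N)) :
    wt A s (a ++ b) = wt A s a * wt A (a.getLastD s) b := by
  induction a generalizing s with
  | nil => exact (one_mul _).symm
  | cons t r ih => rw [List.cons_append, wt, ih t, wt, List.getLastD_cons, mul_assoc]

def DeterminedUpTo (r : ℕ) (E : (ℕ → S N) → Prop) : Prop :=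
  ∀ p q : ℕ → S N, (∀ t ≤ r, p t = q t) → (E p ↔ E q)

theorem IsSubstochastic.prob_and_shift (hA : IsSubstochastic A) (s c : S N) {r m : ℕ}
    {E₁ E₂ : (ℕ → S N) → Prop} (h₁ : DeterminedUpTo r E₁)
    (h₂ : DeterminedUpTo m E₂) (hc : ∀ p, E₁ p → p r = c) :
    prob A s (r + m) (fun p => E₁ p ∧ E₂ (fun t => p (r + t))) =
      prob A s r E₁ * prob A c m E₂ := by
  unfold prob expec
  rw [← (Traj.appendEquiv r m).tsum_eq, Summable.tsum_mul_tsum (hA.summable_prob_summand s r E₁)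
    (hA.summable_prob_summand c m E₂) ((hA.summable_prob_summand s r E₁).mul_of_nonneg
      (hA.summable_prob_summand c m E₂) (fun _ => mul_nonneg (by positivity) (hA.wt_nonneg _ _))
      (fun _ => mul_nonneg (by positivity) (hA.wt_nonneg _ _)))]
  refine tsum_congr fun ⟨⟨a, ha⟩, ⟨b, hb⟩⟩ => ?_
  subst ha hb
  have e₁ : E₁ (pos s (a ++ b)) ↔ E₁ (pos s a) :=
    h₁ _ _ fun t ht => pos_append_of_le s b ht
  by_cases he : E₁ (pos s a)
  · have hlast : a.getLastD s = c := pos_length s a ▸ hc _ he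
    have e₂ : E₂ (fun t => pos s (a ++ b) (a.length + t)) ↔ E₂ (pos c b) :=
      h₂ _ _ fun t ht => by rw [pos_append_add s a ht, hlast]
    simp only [Traj.appendEquiv, Equiv.coe_fn_mk, wt_append, hlast, e₁, e₂, he, true_and]
    split_ifs <;> ring
  · simp [Traj.appendEquiv, e₁, he]

theorem IsSubstochastic.prob_eq_sum_prob_and (hA : IsSubstochastic A) (s : S N) (k : ℕ)
    {ι : Type*} (t : Finset ι) {E : (ℕ → S N) → Prop} (G : ι → (ℕ → S N) → Prop)
    (h : ∀ p, E p → ∃! x, x ∈ t ∧ G x p) :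
    prob A s k E = ∑ x ∈ t, prob A s k (fun p => E p ∧ G x p) := by
  unfold prob expec
  beta_reduce
  rw [← Summable.tsum_finsetSum fun x _ => hA.summable_prob_summand s k fun p => E p ∧ G x p]
  refine tsum_congr fun l => ?_
  by_cases hE : E (pos s l.1)
  · obtain ⟨x, ⟨hx, hG⟩, huniq⟩ := h _ hE
    rw [Finset.sum_eq_single_of_mem x hx fun y hy hyx => by
      rw [if_neg fun hy' => hyx (huniq y ⟨hy, hy'.2⟩), zero_mul]]
    simp [hE, hG]
  · simp [hE]

theorem existsUnique_eq_mk {a : ℤ} {x : S N} (hx : x.1 = a) :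
    ∃! l : Fin N, l ∈ Finset.univ ∧ x = (a, l) :=
  ⟨x.2, ⟨Finset.mem_univ _, Prod.ext hx rfl⟩, fun _ hl => (congrArg Prod.snd hl.2).symm⟩

def VisitAvoiding (n : ℤ) (j : Fin N) (k : ℕ) (p : ℕ → S N) : Prop :=
  p k = ((0 : ℤ), j) ∧ ∀ m < k, (p m).1 ≠ n

def FirstReturnAvoiding (n : ℤ) (l : Fin N) (r : ℕ) (p : ℕ → S N) : Prop :=
  VisitAvoiding n l (r + 1) p ∧ ∀ m < r, (p (m + 1)).1 ≠ 0

theorem determinedUpTo_visitAvoiding (n : ℤ) (j : Fin N) (k : ℕ) :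
    DeterminedUpTo k (VisitAvoiding (N := N) n j k) := by
  intro p q h
  unfold VisitAvoiding
  grind

theorem determinedUpTo_firstReturnAvoiding (n : ℤ) (l : Fin N) (r : ℕ) :
    DeterminedUpTo (r + 1) (FirstReturnAvoiding (N := N) n l r) := by
  intro p q h
  unfold FirstReturnAvoiding VisitAvoiding
  grind

theorem IsSubstochastic.prob_visitAvoiding_succ (hA : IsSubstochastic A) (n : ℤ) (i j : Fin N)
    (k : ℕ) :
    prob A ((0 : ℤ), i) (k + 1) (VisitAvoiding n j (k + 1)) =
      ∑ r ∈ Finset.range (k + 1), ∑ l : Fin N,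
        prob A ((0 : ℤ), i) (r + 1) (FirstReturnAvoiding n l r) *
          prob A ((0 : ℤ), l) (k - r) (VisitAvoiding n j (k - r)) := by
  rw [hA.prob_eq_sum_prob_and _ _ (Finset.range (k + 1))
    (fun r p => (p (r + 1)).1 = 0 ∧ ∀ m < r, ¬(p (m + 1)).1 = 0)
    (fun p hp => existsUnique_isFirst (by rw [hp.1]))]
  refine Finset.sum_congr rfl fun r hr => ?_
  rw [hA.prob_eq_sum_prob_and _ _ Finset.univ (fun l p => p (r + 1) = ((0 : ℤ), l))
    (fun p hp => existsUnique_eq_mk hp.2.1)]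
  refine Finset.sum_congr rfl fun l _ => ?_
  obtain ⟨d, rfl⟩ := Nat.exists_eq_add_of_le (Finset.mem_range_succ_iff.1 hr)
  rw [Nat.add_sub_cancel_left, ← hA.prob_and_shift _ _ (determinedUpTo_firstReturnAvoiding n l r)
    (determinedUpTo_visitAvoiding n j d) (fun p hp => hp.1.1), Nat.add_right_comm]
  congr 1
  funext p
  refine propext ⟨?_, ?_⟩
  · rintro ⟨⟨⟨hk, hav⟩, -, hfirst⟩, hl⟩
    exact ⟨⟨⟨hl, fun m hm => hav m (by omega)⟩, hfirst⟩, hk,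
      fun m hm => hav _ (by omega)⟩
  · rintro ⟨⟨⟨hl, hav₁⟩, hfirst⟩, hk, hav₂⟩
    refine ⟨⟨⟨hk, fun m hm => ?_⟩, by rw [hl], hfirst⟩, hl⟩
    rcases Nat.lt_or_ge m (r + 1) with hm' | hm'
    · exact hav₁ m hm'
    · obtain ⟨m', rfl⟩ := Nat.exists_eq_add_of_le hm'
      exact hav₂ m' (by omega)

def returnMat (A : ℤ → Matrix (Fin N) (Fin N) ℝ) (n : ℤ) : Matrix (Fin N) (Fin N) ℝ :=
  Matrix.of fun i l => ∑' r : ℕ, prob A ((0 : ℤ), i) (r + 1) (FirstReturnAvoiding n l r)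

theorem occUpToMat_one_apply (n : ℤ) (i j : Fin N) :
    occUpToMat A 1 n i j = ∑' k : ℕ, prob A ((0 : ℤ), i) k (VisitAvoiding n j k) := by
  simp only [occUpToMat, Matrix.of_apply, one_pow, one_mul]
  rfl

/-- The entries of `L̃ = occMat A 1 0` are finite. -/
def FiniteOccupation (A : ℤ → Matrix (Fin N) (Fin N) ℝ) : Prop :=
  ∀ i j : Fin N, Summable fun k : ℕ => prob A ((0 : ℤ), i) k fun p => p k = ((0 : ℤ), j)

theorem IsSubstochastic.summable_prob_visitAvoiding (hA : IsSubstochastic A)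
    (hL : FiniteOccupation A) (n : ℤ) (i j : Fin N) :
    Summable fun k => prob A ((0 : ℤ), i) k (VisitAvoiding n j k) :=
  (hL i j).of_nonneg_of_le (fun _ => hA.prob_nonneg _ _ _)
    (fun _ => hA.prob_mono _ _ fun _ hp => hp.1)

theorem IsSubstochastic.summable_prob_firstReturnAvoiding (hA : IsSubstochastic A)
    (hL : FiniteOccupation A) (n : ℤ) (i l : Fin N) :
    Summable fun r => prob A ((0 : ℤ), i) (r + 1) (FirstReturnAvoiding n l r) :=
  ((summable_nat_add_iff 1).2 (hL i l)).of_nonneg_of_le (fun _ => hA.prob_nonneg _ _ _)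
    (fun _ => hA.prob_mono _ _ fun _ hp => hp.1.1)

theorem IsSubstochastic.occUpToMat_eq_one_add_returnMat_mul (hA : IsSubstochastic A)
    (hL : FiniteOccupation A) (n : ℤ) :
    occUpToMat A 1 n = 1 + returnMat A n * occUpToMat A 1 n := by
  ext i j
  set V := fun a b k => prob A ((0 : ℤ), a) k (VisitAvoiding n b k)
  set R := fun a b r => prob A ((0 : ℤ), a) (r + 1) (FirstReturnAvoiding n b r)
  have hRV (l : Fin N) : Summable fun x : ℕ × ℕ => R i l x.1 * V l j x.2 :=
    (hA.summable_prob_firstReturnAvoiding hL n i l).mul_of_nonneg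
      (hA.summable_prob_visitAvoiding hL n l j) (fun _ => hA.prob_nonneg _ _ _)
      (fun _ => hA.prob_nonneg _ _ _)
  rw [Matrix.add_apply, Matrix.mul_apply, occUpToMat_one_apply,
    (hA.summable_prob_visitAvoiding hL n i j).tsum_eq_zero_add]
  congr 1
  · simp [prob_zero, VisitAvoiding, Matrix.one_apply]
  · calc ∑' k, V i j (k + 1)
        = ∑' k, ∑ l, ∑ r ∈ Finset.range (k + 1), R i l r * V l j (k - r) :=
          tsum_congr fun k => (hA.prob_visitAvoiding_succ n i j k).trans Finset.sum_comm
      _ = ∑ l, ∑' k, ∑ r ∈ Finset.range (k + 1), R i l r * V l j (k - r) :=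
          Summable.tsum_finsetSum fun l _ => summable_sum_mul_range_of_summable_mul (hRV l)
      _ = ∑ l, returnMat A n i l * occUpToMat A 1 n l j := by
          refine Finset.sum_congr rfl fun l _ => ?_
          rw [returnMat, Matrix.of_apply, occUpToMat_one_apply,
            (hA.summable_prob_firstReturnAvoiding hL n i l).tsum_mul_tsum_eq_tsum_sum_range
              (hA.summable_prob_visitAvoiding hL n l j) (hRV l)]

theorem level_pos_succ_le_of_wt_ne_zero (hskip : ∀ m : ℤ, 2 ≤ m → A m = 0) {s : S N}
    {l : List (S N)} (hl : wt A s l ≠ 0) {m : ℕ} (hm : m < l.length) :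
    (pos s l (m + 1)).1 ≤ (pos s l m).1 + 1 := by
  induction l generalizing s m with
  | nil => simp at hm
  | cons t r ih =>
    have hstep : step A s t ≠ 0 := left_ne_zero_of_mul hl
    cases m with
    | zero =>
      have hjump : ¬2 ≤ t.1 - s.1 := fun h => hstep (by simp [step, hskip _ h])
      change t.1 ≤ s.1 + 1
      omega
    | succ m =>
      have hm' : m < r.length := by simpa using hm
      rw [pos_cons s t r (m + 1) hm', pos_cons s t r m hm'.le]
      exact ih (right_ne_zero_of_mul hl) hm'

theorem IsSubstochastic.prob_hitsAt_one_succ (hA : IsSubstochastic A)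
    (hskip : ∀ m : ℤ, 2 ≤ m → A m = 0) (i j : Fin N) (k : ℕ) :
    prob A ((0 : ℤ), i) (k + 1) (fun p => hitsAt 1 (k + 1) p ∧ (p (k + 1)).2 = j) =
      ∑ l : Fin N, prob A ((0 : ℤ), i) k (VisitAvoiding 1 l k) * A 1 l j := by
  have hlevel : prob A ((0 : ℤ), i) (k + 1) (fun p => hitsAt 1 (k + 1) p ∧ (p (k + 1)).2 = j) =
      prob A ((0 : ℤ), i) (k + 1)
        (fun p => (hitsAt 1 (k + 1) p ∧ (p (k + 1)).2 = j) ∧ (p k).1 = 0) :=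
    prob_congr_of_wt_ne_zero fun l hl hw => ⟨fun h => ⟨h, by
      simpa using eq_sub_one_of_firstHit (X := fun m => (pos ((0 : ℤ), i) l m).1)
        (fun m hm => level_pos_succ_le_of_wt_ne_zero hskip hw (by omega)) zero_lt_one
        h.1.1 h.1.2⟩, And.left⟩
  rw [hlevel, hA.prob_eq_sum_prob_and _ _ Finset.univ (fun l p => p k = ((0 : ℤ), l))
    (fun p hp => existsUnique_eq_mk hp.2)]
  refine Finset.sum_congr rfl fun l _ => ?_
  have hone : A 1 l j = prob A ((0 : ℤ), l) 1 (fun p => p 1 = ((1 : ℤ), j)) := by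
    rw [prob_one]; simp [step]
  rw [hone, ← hA.prob_and_shift _ _ (determinedUpTo_visitAvoiding 1 l k)
    (fun p q h => by rw [h 1 le_rfl]) (fun p hp => hp.1)]
  congr 1
  funext p
  unfold hitsAt VisitAvoiding
  grind

theorem IsSubstochastic.gmat_eq_occUpToMat_mul (hA : IsSubstochastic A)
    (hskip : ∀ m : ℤ, 2 ≤ m → A m = 0) (hL : FiniteOccupation A) :
    Gmat A = occUpToMat A 1 1 * A 1 := by
  ext i j
  have hsucc := hA.prob_hitsAt_one_succ hskip i j
  have hG : Gmat A i j =
      ∑' k, prob A ((0 : ℤ), i) k (fun p => hitsAt 1 k p ∧ (p k).2 = j) := by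
    simp only [Gmat, hitMat, Matrix.of_apply, one_pow, one_mul]
  have hterm (l : Fin N) :
      Summable fun k => prob A ((0 : ℤ), i) k (VisitAvoiding 1 l k) * A 1 l j :=
    (hA.summable_prob_visitAvoiding hL 1 i l).mul_right _
  rw [hG, Matrix.mul_apply,
    tsum_eq_zero_add' ((summable_sum fun l _ => hterm l).congr fun k => (hsucc k).symm),
    tsum_congr hsucc, Summable.tsum_finsetSum fun l _ => hterm l]
  simp [prob_zero, hitsAt, occUpToMat_one_apply, tsum_mul_right]

theorem statement12_general {N : ℕ} (A : ℤ → Matrix (Fin N) (Fin N) ℝ)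
    (hA : ∀ m i j, 0 ≤ A m i j)
    (hskip : ∀ m : ℤ, 2 ≤ m → A m = 0)
    (hsum : ∀ i, Summable fun q : ℤ × Fin N => A q.1 i q.2)
    (hsub : ∀ i, ∑' q : ℤ × Fin N, A q.1 i q.2 ≤ 1)
    (hA1 : IsUnit (A 1))
    (hL : ∀ i j : Fin N,
      Summable fun k : ℕ => prob A ((0 : ℤ), i) k fun p => p k = ((0 : ℤ), j)) :
    (∀ n : ℕ, 1 ≤ n → IsUnit (occUpToMat A 1 (n : ℤ))) ∧
    IsUnit (Gmat A) ∧
    (∀ n : ℕ, 1 ≤ n → IsUnit ((Gmat A)⁻¹ ^ n * occUpToMat A 1 (n : ℤ))) := by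
  have hA' : IsSubstochastic A := ⟨hA, hsum, hsub⟩
  have hocc (n : ℤ) : IsUnit (occUpToMat A 1 n) :=
    Matrix.isUnit_of_eq_one_add_mul (hA'.occUpToMat_eq_one_add_returnMat_mul hL n)
  have hG : IsUnit (Gmat A) := by
    rw [hA'.gmat_eq_occUpToMat_mul hskip hL]
    exact (hocc 1).mul hA1
  exact ⟨fun n _ => hocc n, hG,
    fun n _ => ((Matrix.isUnit_nonsing_inv_iff.2 hG).pow n).mul (hocc n)⟩

/-- Invertibility: (1) L̃(n) is invertible for n ≥ 1;
(2) G is invertible; (3) W(n) = G^{-n} L̃(n) is invertible for n ≥ 1. -/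
theorem statement12 {N : ℕ} (hN : 0 < N) (A : ℤ → Matrix (Fin N) (Fin N) ℝ)
    (hA : ∀ m i j, 0 ≤ A m i j)
    (hskip : ∀ m : ℤ, 2 ≤ m → A m = 0)
    (hsum : ∀ i, Summable fun q : ℤ × Fin N => A q.1 i q.2)
    (hsub : ∀ i, ∑' q : ℤ × Fin N, A q.1 i q.2 ≤ 1)
    (hA1 : IsUnit (A 1))
    (hL : ∀ i j : Fin N,
      Summable fun k : ℕ => prob A ((0 : ℤ), i) k fun p => p k = ((0 : ℤ), j)) :
    (∀ n : ℕ, 1 ≤ n → IsUnit (occUpToMat A 1 (n : ℤ))) ∧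
    IsUnit (Gmat A) ∧
    (∀ n : ℕ, 1 ≤ n → IsUnit ((Gmat A)⁻¹ ^ n * occUpToMat A 1 (n : ℤ))) :=
  statement12_general A hA hskip hsum hsub hA1 hL

end MACPaper

end
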